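/- Under the hypotheses of the derivation theorem (p_ε a family of nonnegative weak solutions of the rescaled kinetic-transport equation ∂_t p_ε + v·∇_x p_ε + (1/ε) ∂_m( f(m−M) p_ε ) = Q_ε[p_ε] with p_ε(m=0)=0, initial data p^ini with ∫(1+m²)p^ini < ∞ and p̄^ini ∈ L^∞, and uniform bounds sup_{ε,t} ‖p̄_ε(t)‖_{L^∞} < ∞ and sup_{ε,t} ∫∫∫ ((m−M)/ε)² p_ε < ∞), let ε_n → 0 and p̄_0 be such that p̄_{ε_n} = ∫ p_{ε_n} dm converges to p̄_0 in L^∞ weak-*. Then the measures p_{ε_n} dx dv dm dt concentrate at m = M(x,t): for every ψ ∈ C_c(ℝ^d × V × ℝ × [0,T]), ∫∫∫∫ ψ(x,v,m,t) p_{ε_n}(x,v,m,t) dx dv dm dt → ∫∫∫ ψ(x,v,M(x,t),t) p̄_0(x,v,t) dx dv dt, i.e. the limit measure is p_0 = p̄_0(x,v,t) δ(m = M(x,t)). -/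

import Mathlib

open MeasureTheory Real Set Filter

/-- Euclidean space `ℝ^d`. -/
abbrev Euc (d : ℕ) := EuclideanSpace ℝ (Fin d)

/-- The measure `dx ⊗ (dv restricted to V) ⊗ (dt restricted to [0,T])` on `ℝ^d × V × [0,T]`. -/
noncomputable def xvtMeasure (d : ℕ) (V : Set (Euc d)) (T : ℝ) :
    Measure (Euc d × Euc d × ℝ) :=
  (volume : Measure (Euc d)).prod
    (((volume : Measure (Euc d)).restrict V).prod
      ((volume : Measure ℝ).restrict (Set.Icc (0:ℝ) T)))

open ENNReal

set_option maxHeartbeats 2000000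

section Aux

variable {α β γ δ' : Type*} [MeasurableSpace α] [MeasurableSpace β]
  [MeasurableSpace γ] [MeasurableSpace δ']

lemma aux_integrable {μ : Measure α} {g : α → ℝ} {S : Set α} {C : ℝ}
    (hg : AEStronglyMeasurable g μ) (hS : MeasurableSet S) (hSfin : μ S < ⊤)
    (hbd : ∀ᵐ a ∂μ, |g a| ≤ S.indicator (fun _ => C) a) : Integrable g μ := by
  have hind : Integrable (S.indicator (fun _ => C)) μ :=
    (integrable_indicator_iff hS).2 (integrableOn_const hSfin.ne)
  exact hind.mono' hg (by simpa [Real.norm_eq_abs] using hbd)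

lemma aux_triple {μ : Measure α} {ν : Measure β} {κ : Measure γ}
    [SigmaFinite μ] [SigmaFinite ν] [SigmaFinite κ]
    (f : α × β × γ → ℝ) (hf : Integrable f (μ.prod (ν.prod κ))) :
    ∫ z, f z ∂(μ.prod (ν.prod κ)) = ∫ a, ∫ b, ∫ c, f (a, b, c) ∂κ ∂ν ∂μ := by
  rw [integral_prod _ hf]
  refine integral_congr_ae ?_
  filter_upwards [hf.prod_right_ae] with a ha
  exact integral_prod _ ha

lemma aux_quad {μ : Measure α} {ν : Measure β} {κ : Measure γ} {ι : Measure δ'}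
    [SigmaFinite μ] [SigmaFinite ν] [SigmaFinite κ] [SigmaFinite ι]
    (f : α × β × γ × δ' → ℝ) (hf : Integrable f (μ.prod (ν.prod (κ.prod ι)))) :
    ∫ z, f z ∂(μ.prod (ν.prod (κ.prod ι)))
      = ∫ a, ∫ b, ∫ c, ∫ e, f (a, b, c, e) ∂ι ∂κ ∂ν ∂μ := by
  rw [integral_prod _ hf]
  refine integral_congr_ae ?_
  filter_upwards [hf.prod_right_ae] with a ha
  exact aux_triple _ ha

lemma aux_lint_triple (μ : Measure α) (ν : Measure β) (κ : Measure γ)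
    [SFinite ν] [SFinite κ]
    (f : α × β × γ → ℝ≥0∞) (hf : Measurable f) :
    ∫⁻ z, f z ∂(μ.prod (ν.prod κ)) = ∫⁻ a, ∫⁻ b, ∫⁻ c, f (a, b, c) ∂κ ∂ν ∂μ := by
  rw [lintegral_prod _ hf.aemeasurable]
  exact lintegral_congr fun a =>
    lintegral_prod _ ((hf.comp measurable_prodMk_left).aemeasurable)

lemma aux_lint_quad (μ : Measure α) (ν : Measure β) (κ : Measure γ) (ι : Measure δ')
    [SFinite ν] [SFinite κ] [SFinite ι]
    (f : α × β × γ × δ' → ℝ≥0∞) (hf : Measurable f) :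
    ∫⁻ z, f z ∂(μ.prod (ν.prod (κ.prod ι)))
      = ∫⁻ a, ∫⁻ b, ∫⁻ c, ∫⁻ e, f (a, b, c, e) ∂ι ∂κ ∂ν ∂μ := by
  rw [lintegral_prod _ hf.aemeasurable]
  exact lintegral_congr fun a =>
    aux_lint_triple _ _ _ _ (hf.comp measurable_prodMk_left)

lemma aux_ae_t2 (μ : Measure α) (ν : Measure β) [SFinite ν] {s : Set β}
    (h0 : ν sᶜ = 0) : ∀ᵐ z : α × β ∂(μ.prod ν), z.2 ∈ s := by
  rw [ae_iff]
  have he : {z : α × β | ¬ z.2 ∈ s} = Set.univ ×ˢ sᶜ := by ext z; simp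
  rw [he, Measure.prod_prod, h0, mul_zero]

lemma aux_ae_t3 (μ : Measure α) (ν : Measure β) (κ : Measure γ) [SFinite ν] [SFinite κ] {s : Set γ}
    (h0 : κ sᶜ = 0) : ∀ᵐ z : α × β × γ ∂(μ.prod (ν.prod κ)), z.2.2 ∈ s := by
  rw [ae_iff]
  have he : {z : α × β × γ | ¬ z.2.2 ∈ s} = Set.univ ×ˢ (Set.univ ×ˢ sᶜ) := by
    ext z; simp
  rw [he, Measure.prod_prod, Measure.prod_prod, h0, mul_zero, mul_zero]

end Aux

lemma aux_xvt (d : ℕ) (V : Set (Euc d)) (T : ℝ) (hVmeas : MeasurableSet V)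
    (hVfin : volume V < ⊤) (R C : ℝ)
    (h : Euc d → Euc d → ℝ → ℝ)
    (hmeas : Measurable fun z : Euc d × Euc d × ℝ => h z.1 z.2.1 z.2.2)
    (hbd : ∀ x v t, t ∈ Set.Icc (0:ℝ) T →
      |h x v t| ≤ (Metric.closedBall (0:Euc d) R).indicator (fun _ => C) x) :
    ∫ z, h z.1 z.2.1 z.2.2 ∂(xvtMeasure d V T)
      = ∫ t in Set.Icc (0:ℝ) T, ∫ x, ∫ v in V, h x v t := by
  set B := Metric.closedBall (0:Euc d) R with hBdef
  have hBm : MeasurableSet B := measurableSet_closedBall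
  have hBfin : volume B < ⊤ := measure_closedBall_lt_top
  have hμvuniv : (volume : Measure (Euc d)).restrict V Set.univ < ⊤ := by
    rw [Measure.restrict_apply_univ]; exact hVfin
  have hμtIcc : (volume : Measure ℝ).restrict (Set.Icc (0:ℝ) T) (Set.Icc (0:ℝ) T) < ⊤ := by
    rw [Measure.restrict_apply measurableSet_Icc, Set.inter_self, Real.volume_Icc]
    exact ENNReal.ofReal_lt_top
  have hμtc : (volume : Measure ℝ).restrict (Set.Icc (0:ℝ) T) (Set.Icc (0:ℝ) T)ᶜ = 0 := by
    rw [Measure.restrict_apply measurableSet_Icc.compl]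
    simp
  -- integrability over the triple product
  have hInt : Integrable (fun z : Euc d × Euc d × ℝ => h z.1 z.2.1 z.2.2)
      ((volume : Measure (Euc d)).prod
        (((volume : Measure (Euc d)).restrict V).prod
          ((volume : Measure ℝ).restrict (Set.Icc (0:ℝ) T)))) := by
    apply aux_integrable (S := B ×ˢ ((Set.univ : Set (Euc d)) ×ˢ Set.Icc (0:ℝ) T)) (C := C)
      hmeas.aestronglyMeasurable
      (hBm.prod (MeasurableSet.univ.prod measurableSet_Icc))
    · rw [Measure.prod_prod, Measure.prod_prod]
      exact ENNReal.mul_lt_top hBfin (ENNReal.mul_lt_top hμvuniv hμtIcc)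
    · filter_upwards [aux_ae_t3 _ _ _ hμtc] with z hz
      by_cases hx : z.1 ∈ B
      · rw [Set.indicator_of_mem (Set.mk_mem_prod hx (Set.mk_mem_prod (Set.mem_univ _) hz))]
        simpa [Set.indicator_of_mem hx] using hbd z.1 z.2.1 z.2.2 hz
      · rw [Set.indicator_of_notMem (fun hmem => hx hmem.1)]
        simpa [Set.indicator_of_notMem hx] using hbd z.1 z.2.1 z.2.2 hz
  have step1 : ∫ z, h z.1 z.2.1 z.2.2 ∂(xvtMeasure d V T)
      = ∫ x, ∫ v in V, ∫ t in Set.Icc (0:ℝ) T, h x v t ∂volume ∂volume := by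
    exact aux_triple _ hInt
  -- inner swap
  have hswap1 : ∀ x : Euc d,
      (∫ v in V, ∫ t in Set.Icc (0:ℝ) T, h x v t)
        = ∫ t in Set.Icc (0:ℝ) T, ∫ v in V, h x v t := by
    intro x
    apply integral_integral_swap (f := fun v t => h x v t)
    apply aux_integrable (S := (Set.univ : Set (Euc d)) ×ˢ Set.Icc (0:ℝ) T)
      (C := B.indicator (fun _ => C) x)
      ((hmeas.comp (measurable_prodMk_left (x := x))).aestronglyMeasurable :
        AEStronglyMeasurable (Function.uncurry fun v t => h x v t) _)
      (MeasurableSet.univ.prod measurableSet_Icc)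
    · rw [Measure.prod_prod]
      exact ENNReal.mul_lt_top hμvuniv hμtIcc
    · filter_upwards [aux_ae_t2 _ _ hμtc] with w hw
      rw [Set.indicator_of_mem (Set.mk_mem_prod (Set.mem_univ _) hw)]
      exact hbd x w.1 w.2 hw
  -- outer swap
  have hK : Integrable (Function.uncurry fun x t => ∫ v in V, h x v t)
      ((volume : Measure (Euc d)).prod
        ((volume : Measure ℝ).restrict (Set.Icc (0:ℝ) T))) := by
    apply aux_integrable (S := B ×ˢ Set.Icc (0:ℝ) T) (C := C * (volume V).toReal)
    · have hq : StronglyMeasurable fun q : (Euc d × ℝ) × Euc d => h q.1.1 q.2 q.1.2 := by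
        apply Measurable.stronglyMeasurable
        exact hmeas.comp ((measurable_fst.fst).prodMk
          ((measurable_snd).prodMk (measurable_fst.snd)))
      exact hq.integral_prod_right'.aestronglyMeasurable
    · exact hBm.prod measurableSet_Icc
    · rw [Measure.prod_prod]
      exact ENNReal.mul_lt_top hBfin hμtIcc
    · filter_upwards [aux_ae_t2 _ _ hμtc] with q hq
      by_cases hx : q.1 ∈ B
      · rw [Set.indicator_of_mem (Set.mk_mem_prod hx hq)]
        have : ∀ v ∈ V, ‖h q.1 v q.2‖ ≤ C := by
          intro v _
          have := hbd q.1 v q.2 hq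
          rw [Set.indicator_of_mem hx] at this
          simpa [Real.norm_eq_abs] using this
        have hb := norm_setIntegral_le_of_norm_le_const (μ := volume) (s := V)
          (f := fun v => h q.1 v q.2) hVfin this
        calc |Function.uncurry (fun x t => ∫ v in V, h x v t) q|
            = ‖∫ v in V, h q.1 v q.2‖ := rfl
          _ ≤ C * (volume V).toReal := hb
      · rw [Set.indicator_of_notMem (fun hmem => hx hmem.1)]
        have hzero : ∀ v, h q.1 v q.2 = 0 := by
          intro v
          have := hbd q.1 v q.2 hq
          rw [Set.indicator_of_notMem hx] at this
          exact abs_nonpos_iff.1 this |>.symm ▸ rfl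
        have : (∫ v in V, h q.1 v q.2) = 0 := by
          simp [hzero]
        simp [Function.uncurry, this]
  have step3 : (∫ x, ∫ t in Set.Icc (0:ℝ) T, ∫ v in V, h x v t)
      = ∫ t in Set.Icc (0:ℝ) T, ∫ x, ∫ v in V, h x v t :=
    integral_integral_swap (f := fun x t => ∫ v in V, h x v t) hK
  rw [step1, ← step3]
  exact integral_congr_ae (Filter.Eventually.of_forall fun x => hswap1 x)
/-- **Concentration of the methylation variable at `m = M(x,t)` in the fast-adaptation
limit.**  Under the hypotheses of the derivation theorem (nonnegative weak solutions `p_ε`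
of the rescaled kinetic-transport equation with the stated initial data and uniform a priori
bounds), if `ε_n → 0` and `p̄_{ε_n} = ∫ p_{ε_n} dm → p̄_0` in `L^∞` weak-*, then the measures
`p_{ε_n} dx dv dm dt` concentrate at `m = M(x,t)`: for every
`ψ ∈ C_c(ℝ^d × V × ℝ × [0,T])`,
`∫∫∫∫ ψ(x,v,m,t) p_{ε_n} dx dv dm dt → ∫∫∫ ψ(x,v,M(x,t),t) p̄_0(x,v,t) dx dv dt`,
i.e. the limit measure is `p_0 = p̄_0(x,v,t) δ(m = M(x,t))`. -/
theorem concentration_at_equilibrium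
    (d : ℕ) (hd : 1 ≤ d) (T : ℝ) (hT : 0 < T)
    (V : Set (Euc d)) (hVmeas : MeasurableSet V) (hVbdd : Bornology.IsBounded V)
    (hVpos : 0 < volume V)
    (M : Euc d → ℝ → ℝ) (mminus mplus : ℝ) (hmminus : 0 < mminus)
    (hMbd : ∀ x t, mminus ≤ M x t ∧ M x t ≤ mplus)
    (hM : ContDiff ℝ 1 (fun z : Euc d × ℝ => M z.1 z.2))
    (hMder : ∃ KM, ∀ z : Euc d × ℝ,
      ‖fderiv ℝ (fun w : Euc d × ℝ => M w.1 w.2) z‖ ≤ KM)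
    (G : ℝ → ℝ) (gminus gplus : ℝ) (hgminus : 0 < gminus)
    (hG : ContDiff ℝ 1 G) (hGder : ∃ KG, ∀ y, |deriv G y| ≤ KG)
    (hGbd : ∀ y, gminus ≤ G y ∧ G y ≤ gplus)
    (Λ : ℝ → Euc d → Euc d → ℝ) (lamMinus lamPlus : ℝ) (hlamMinus : 0 < lamMinus)
    (hΛcont : Continuous fun z : ℝ × Euc d × Euc d => Λ z.1 z.2.1 z.2.2)
    (hΛmono : ∀ (y : ℝ) (v v' : Euc d), deriv (fun y' => Λ y' v v') y < 0)
    (hΛbd : ∀ y v v', lamMinus ≤ Λ y v v' ∧ Λ y v v' ≤ lamPlus)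
    (p : ℝ → Euc d → Euc d → ℝ → ℝ → ℝ)
    (hp_nonneg : ∀ ε ∈ Set.Ioc (0:ℝ) 1, ∀ x v m t, 0 ≤ p ε x v m t)
    (hp_meas : ∀ ε ∈ Set.Ioc (0:ℝ) 1,
      Measurable fun z : Euc d × Euc d × ℝ × ℝ => p ε z.1 z.2.1 z.2.2.1 z.2.2.2)
    (pini : Euc d → Euc d → ℝ → ℝ)
    (hpini_nonneg : ∀ x v m, 0 ≤ pini x v m)
    (hpini_meas : Measurable fun z : Euc d × Euc d × ℝ => pini z.1 z.2.1 z.2.2)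
    (hpini_mom : (∫⁻ x : Euc d, ∫⁻ v in V, ∫⁻ m in Set.Ioi (0:ℝ),
      ENNReal.ofReal ((1 + m ^ 2) * pini x v m)) < ⊤)
    (hpini_Linf : ∃ C0, ∀ x v,
      (∫⁻ m in Set.Ioi (0:ℝ), ENNReal.ofReal (pini x v m)) ≤ ENNReal.ofReal C0)
    -- `p_ε` is a weak solution of the rescaled kinetic-transport equation
    (hweak : ∀ ε ∈ Set.Ioc (0:ℝ) 1, ∀ φ : Euc d → Euc d → ℝ → ℝ → ℝ,
      ContDiff ℝ (⊤ : ℕ∞) (fun z : Euc d × Euc d × ℝ × ℝ => φ z.1 z.2.1 z.2.2.1 z.2.2.2) →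
      HasCompactSupport (fun z : Euc d × Euc d × ℝ × ℝ => φ z.1 z.2.1 z.2.2.1 z.2.2.2) →
      tsupport (fun z : Euc d × Euc d × ℝ × ℝ => φ z.1 z.2.1 z.2.2.1 z.2.2.2) ⊆
        {z : Euc d × Euc d × ℝ × ℝ | 0 < z.2.2.1 ∧ z.2.2.2 < T} →
      (∫ t in Set.Icc (0:ℝ) T, ∫ x : Euc d, ∫ v in V, ∫ m in Set.Ioi (0:ℝ),
          (p ε x v m t *
            (deriv (fun s => φ x v m s) t
              + fderiv ℝ (fun x' => φ x' v m t) x v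
              + (1 / ε) * (-(m - M x t) * G (m - M x t)) *
                  deriv (fun m' => φ x v m' t) m)
          + (∫ v' in V, (Λ ((m - M x t) / ε) v v' * p ε x v' m t
              - Λ ((m - M x t) / ε) v' v * p ε x v m t)) * φ x v m t))
        + (∫ x : Euc d, ∫ v in V, ∫ m in Set.Ioi (0:ℝ), pini x v m * φ x v m 0) = 0)
    -- uniform a priori bounds
    (hLinf : ∃ C1, ∀ ε ∈ Set.Ioc (0:ℝ) 1, ∀ t ∈ Set.Icc (0:ℝ) T, ∀ x v,
      (∫⁻ m in Set.Ioi (0:ℝ), ENNReal.ofReal (p ε x v m t)) ≤ ENNReal.ofReal C1)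
    (hmom2 : ∃ C2, ∀ ε ∈ Set.Ioc (0:ℝ) 1, ∀ t ∈ Set.Icc (0:ℝ) T,
      (∫⁻ x : Euc d, ∫⁻ v in V, ∫⁻ m in Set.Ioi (0:ℝ),
        ENNReal.ofReal (((m - M x t) / ε) ^ 2 * p ε x v m t)) ≤ ENNReal.ofReal C2)
    -- a sequence `ε_n → 0` along which `p̄_{ε_n} → p̄_0` in `L^∞` weak-*
    (εn : ℕ → ℝ) (hεn_mem : ∀ n, εn n ∈ Set.Ioc (0:ℝ) 1)
    (hεn_lim : Tendsto εn atTop (nhds 0))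
    (pbar0 : Euc d → Euc d → ℝ → ℝ)
    (hpbar0_meas : Measurable fun z : Euc d × Euc d × ℝ => pbar0 z.1 z.2.1 z.2.2)
    (hpbar0_bdd : ∃ Cb, ∀ x v t, |pbar0 x v t| ≤ Cb)
    (hweakstar : ∀ ψ : Euc d × Euc d × ℝ → ℝ, Integrable ψ (xvtMeasure d V T) →
      Tendsto (fun n => ∫ z, (∫ m in Set.Ioi (0:ℝ), p (εn n) z.1 z.2.1 m z.2.2) * ψ z
          ∂(xvtMeasure d V T)) atTop
        (nhds (∫ z, pbar0 z.1 z.2.1 z.2.2 * ψ z ∂(xvtMeasure d V T)))) :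
    -- conclusion: concentration at `m = M(x,t)`, i.e. `p_0 = p̄_0 δ(m = M(x,t))`
    ∀ ψ : Euc d → Euc d → ℝ → ℝ → ℝ,
      Continuous (fun z : Euc d × Euc d × ℝ × ℝ => ψ z.1 z.2.1 z.2.2.1 z.2.2.2) →
      HasCompactSupport (fun z : Euc d × Euc d × ℝ × ℝ => ψ z.1 z.2.1 z.2.2.1 z.2.2.2) →
      Tendsto (fun n => ∫ t in Set.Icc (0:ℝ) T, ∫ x : Euc d, ∫ v in V,
          ∫ m in Set.Ioi (0:ℝ), ψ x v m t * p (εn n) x v m t) atTop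
        (nhds (∫ t in Set.Icc (0:ℝ) T, ∫ x : Euc d, ∫ v in V,
          ψ x v (M x t) t * pbar0 x v t)) := by
  classical
  intro ψ hψcont hψcs
  obtain ⟨C1, hC1⟩ := hLinf
  obtain ⟨C2, hC2⟩ := hmom2
  obtain ⟨Cb, hCb⟩ := hpbar0_bdd
  have hCbnn : 0 ≤ Cb := le_trans (abs_nonneg _) (hCb 0 0 0)
  have hMc : Continuous fun z : Euc d × ℝ => M z.1 z.2 := hM.continuous
  have hVfin : volume V < ⊤ := hVbdd.measure_lt_top
  -- global bound on ψ
  obtain ⟨Cψ₀, hCψ₀⟩ := hψcs.exists_bound_of_continuous hψcont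
  set Cψ : ℝ := |Cψ₀| + 1 with hCψdef
  have hCψpos : 0 < Cψ := by positivity
  have hCψ : ∀ x v m t, |ψ x v m t| ≤ Cψ := by
    intro x v m t
    have h := hCψ₀ (x, v, m, t)
    rw [Real.norm_eq_abs] at h
    calc |ψ x v m t| ≤ Cψ₀ := h
      _ ≤ Cψ := by rw [hCψdef]; nlinarith [abs_nonneg Cψ₀, le_abs_self Cψ₀]
  -- support radius
  obtain ⟨R, hRsupp⟩ := isBounded_iff_forall_norm_le.1 hψcs.isBounded
  set B : Set (Euc d) := Metric.closedBall (0 : Euc d) R with hBdef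
  have hBm : MeasurableSet B := measurableSet_closedBall
  have hBfin : volume B < ⊤ := measure_closedBall_lt_top
  have hψzero : ∀ x v m t, x ∉ B → ψ x v m t = 0 := by
    intro x v m t hx
    by_contra hne
    apply hx
    have hmem : ((x, v, m, t) : Euc d × Euc d × ℝ × ℝ) ∈
        tsupport (fun z : Euc d × Euc d × ℝ × ℝ => ψ z.1 z.2.1 z.2.2.1 z.2.2.2) :=
      subset_tsupport _ hne
    exact Metric.mem_closedBall.2 (by
      simpa [dist_eq_norm] using le_trans (norm_fst_le ((x, v, m, t) : Euc d × Euc d × ℝ × ℝ))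
        (hRsupp _ hmem))
  -- uniform continuity of ψ
  have hψu : UniformContinuous (fun z : Euc d × Euc d × ℝ × ℝ => ψ z.1 z.2.1 z.2.2.1 z.2.2.2) :=
    hψcs.uniformContinuous_of_continuous hψcont
  have hdist : ∀ (x v : Euc d) (m t : ℝ),
      dist ((x, v, m, t) : Euc d × Euc d × ℝ × ℝ) ((x, v, M x t, t) : Euc d × Euc d × ℝ × ℝ)
        = |m - M x t| := by
    intro x v m t
    simp only [Prod.dist_eq, dist_self, Real.dist_eq]
    rw [show |m - M x t| ⊔ 0 = |m - M x t| from max_eq_left (abs_nonneg _),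
        show (0:ℝ) ⊔ |m - M x t| = |m - M x t| from max_eq_right (abs_nonneg _),
        show (0:ℝ) ⊔ |m - M x t| = |m - M x t| from max_eq_right (abs_nonneg _)]
  -- continuity of the trace test function Ψ
  have hΨcont : Continuous (fun z : Euc d × Euc d × ℝ => ψ z.1 z.2.1 (M z.1 z.2.2) z.2.2) := by
    have hg : Continuous (fun z : Euc d × Euc d × ℝ =>
        ((z.1, z.2.1, M z.1 z.2.2, z.2.2) : Euc d × Euc d × ℝ × ℝ)) :=
      continuous_fst.prodMk ((continuous_fst.comp continuous_snd).prodMk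
        ((hMc.comp (continuous_fst.prodMk (continuous_snd.comp continuous_snd))).prodMk
          (continuous_snd.comp continuous_snd)))
    exact hψcont.comp hg
  have hΨzero : ∀ z : Euc d × Euc d × ℝ, z.1 ∉ B → ψ z.1 z.2.1 (M z.1 z.2.2) z.2.2 = 0 :=
    fun z hz => hψzero _ _ _ _ hz
  -- measure of rectangles in xvtMeasure
  have hμtIcc : (volume : Measure ℝ).restrict (Set.Icc (0:ℝ) T) Set.univ < ⊤ := by
    rw [Measure.restrict_apply_univ, Real.volume_Icc]; exact ENNReal.ofReal_lt_top
  have hμvuniv : (volume : Measure (Euc d)).restrict V Set.univ < ⊤ := by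
    rw [Measure.restrict_apply_univ]; exact hVfin
  -- integrability of Ψ
  have hΨint : Integrable (fun z : Euc d × Euc d × ℝ => ψ z.1 z.2.1 (M z.1 z.2.2) z.2.2)
      (xvtMeasure d V T) := by
    apply aux_integrable (S := B ×ˢ (Set.univ : Set (Euc d × ℝ))) (C := Cψ)
      hΨcont.aestronglyMeasurable (hBm.prod MeasurableSet.univ)
    · have : xvtMeasure d V T (B ×ˢ (Set.univ : Set (Euc d × ℝ)))
          = volume B * ((((volume : Measure (Euc d)).restrict V).prod
            ((volume : Measure ℝ).restrict (Set.Icc (0:ℝ) T))) Set.univ) :=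
        Measure.prod_prod _ _
      rw [this, ← Set.univ_prod_univ, Measure.prod_prod]
      exact ENNReal.mul_lt_top hBfin (ENNReal.mul_lt_top hμvuniv hμtIcc)
    · refine Filter.Eventually.of_forall fun z => ?_
      by_cases hx : z.1 ∈ B
      · rw [Set.indicator_of_mem (Set.mk_mem_prod hx (Set.mem_univ _))]
        exact hCψ _ _ _ _
      · rw [Set.indicator_of_notMem (fun hmem => hx hmem.1), hΨzero z hx]
        simp
  -- weak-* convergence applied to Ψ
  have hWlim' : Tendsto (fun n => ∫ z, (∫ m in Set.Ioi (0:ℝ), p (εn n) z.1 z.2.1 m z.2.2)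
        * (ψ z.1 z.2.1 (M z.1 z.2.2) z.2.2) ∂(xvtMeasure d V T)) atTop
      (nhds (∫ z, pbar0 z.1 z.2.1 z.2.2
        * (ψ z.1 z.2.1 (M z.1 z.2.2) z.2.2) ∂(xvtMeasure d V T))) :=
    hweakstar _ hΨint
  -- identification of the limit
  have hRHS : (∫ z, pbar0 z.1 z.2.1 z.2.2
        * (ψ z.1 z.2.1 (M z.1 z.2.2) z.2.2) ∂(xvtMeasure d V T))
      = ∫ t in Set.Icc (0:ℝ) T, ∫ x : Euc d, ∫ v in V,
          ψ x v (M x t) t * pbar0 x v t := by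
    have hm : Measurable (fun z : Euc d × Euc d × ℝ =>
        pbar0 z.1 z.2.1 z.2.2 * ψ z.1 z.2.1 (M z.1 z.2.2) z.2.2) :=
      hpbar0_meas.mul hΨcont.measurable
    have hb : ∀ x v t, t ∈ Set.Icc (0:ℝ) T →
        |pbar0 x v t * ψ x v (M x t) t| ≤ B.indicator (fun _ => Cb * Cψ) x := by
      intro x v t _
      by_cases hx : x ∈ B
      · rw [Set.indicator_of_mem hx, abs_mul]
        exact mul_le_mul (hCb _ _ _) (hCψ _ _ _ _) (abs_nonneg _) hCbnn
      · rw [Set.indicator_of_notMem hx, hψzero x v (M x t) t hx, mul_zero, abs_zero]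
    have h1 := aux_xvt d V T hVmeas hVfin R (Cb * Cψ)
      (fun x v t => pbar0 x v t * ψ x v (M x t) t) hm hb
    have hcomm : ∀ x v t, pbar0 x v t * ψ x v (M x t) t
        = ψ x v (M x t) t * pbar0 x v t := fun _ _ _ => mul_comm _ _
    calc (∫ z, pbar0 z.1 z.2.1 z.2.2 * (ψ z.1 z.2.1 (M z.1 z.2.2) z.2.2) ∂(xvtMeasure d V T))
        = ∫ t in Set.Icc (0:ℝ) T, ∫ x : Euc d, ∫ v in V,
            pbar0 x v t * ψ x v (M x t) t := h1
      _ = ∫ t in Set.Icc (0:ℝ) T, ∫ x : Euc d, ∫ v in V,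
            ψ x v (M x t) t * pbar0 x v t := by simp only [hcomm]
  -- measurability of the rearranged p
  have hpmz : ∀ ε ∈ Set.Ioc (0:ℝ) 1, Measurable
      (fun z : ℝ × Euc d × Euc d × ℝ => p ε z.2.1 z.2.2.1 z.2.2.2 z.1) := by
    intro ε hε
    exact (hp_meas ε hε).comp ((measurable_fst.comp measurable_snd).prodMk
      (((measurable_fst.comp (measurable_snd.comp measurable_snd))).prodMk
        (((measurable_snd.comp (measurable_snd.comp measurable_snd))).prodMk measurable_fst)))
  have hχtop : ∀ x : Euc d, B.indicator (fun _ => (1:ℝ≥0∞)) x ≠ ⊤ := by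
    intro x; by_cases hx : x ∈ B <;> simp [hx]
  -- uniform L¹ bound
  have hLP : ∀ ε ∈ Set.Ioc (0:ℝ) 1,
      (∫⁻ z : ℝ × Euc d × Euc d × ℝ, B.indicator (fun _ => (1:ℝ≥0∞)) z.2.1
        * ENNReal.ofReal (p ε z.2.1 z.2.2.1 z.2.2.2 z.1) ∂(((volume : Measure ℝ).restrict (Set.Icc (0:ℝ) T)).prod ((volume : Measure (Euc d)).prod (((volume : Measure (Euc d)).restrict V).prod ((volume : Measure ℝ).restrict (Set.Ioi (0:ℝ)))))))
      ≤ ENNReal.ofReal C1 * volume V * volume B * ENNReal.ofReal T := by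
    intro ε hε
    have hfm : Measurable (fun z : ℝ × Euc d × Euc d × ℝ =>
        B.indicator (fun _ => (1:ℝ≥0∞)) z.2.1
          * ENNReal.ofReal (p ε z.2.1 z.2.2.1 z.2.2.2 z.1)) :=
      ((measurable_const.indicator hBm).comp
        (measurable_fst.comp measurable_snd)).mul (hpmz ε hε).ennreal_ofReal
    rw [aux_lint_quad _ _ _ _ _ hfm]
    have hslice : ∀ t ∈ Set.Icc (0:ℝ) T,
        (∫⁻ x : Euc d, ∫⁻ v in V, ∫⁻ m in Set.Ioi (0:ℝ),
          B.indicator (fun _ => (1:ℝ≥0∞)) x * ENNReal.ofReal (p ε x v m t))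
        ≤ ENNReal.ofReal C1 * volume V * volume B := by
      intro t ht
      have hstep1 : ∀ x : Euc d, (∫⁻ v in V, ∫⁻ m in Set.Ioi (0:ℝ),
          B.indicator (fun _ => (1:ℝ≥0∞)) x * ENNReal.ofReal (p ε x v m t))
          ≤ B.indicator (fun _ => ENNReal.ofReal C1 * volume V) x := by
        intro x
        by_cases hx : x ∈ B
        · rw [Set.indicator_of_mem hx, Set.indicator_of_mem hx]
          simp only [one_mul]
          have hb1 : ∀ v : Euc d, (∫⁻ m in Set.Ioi (0:ℝ),
              ENNReal.ofReal (p ε x v m t)) ≤ ENNReal.ofReal C1 :=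
            fun v => hC1 ε hε t ht x v
          refine le_trans (lintegral_mono (g := fun _ => ENNReal.ofReal C1) hb1) ?_
          rw [setLIntegral_const]
        · simp only [Set.indicator_of_notMem hx, zero_mul, lintegral_zero, lintegral_const,
            zero_mul]
          exact zero_le
      refine le_trans (lintegral_mono hstep1) ?_
      rw [lintegral_indicator hBm, setLIntegral_const]
    refine le_trans (lintegral_mono_ae
        (g := fun _ => ENNReal.ofReal C1 * volume V * volume B) ?_) ?_
    · filter_upwards [ae_restrict_mem measurableSet_Icc] with t ht
      exact hslice t ht
    · rw [setLIntegral_const, Real.volume_Icc, sub_zero]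
  -- uniform second-moment bound
  have hLM : ∀ ε ∈ Set.Ioc (0:ℝ) 1,
      (∫⁻ z : ℝ × Euc d × Euc d × ℝ, ENNReal.ofReal (((z.2.2.2 - M z.2.1 z.1) / ε) ^ 2
        * p ε z.2.1 z.2.2.1 z.2.2.2 z.1) ∂(((volume : Measure ℝ).restrict (Set.Icc (0:ℝ) T)).prod ((volume : Measure (Euc d)).prod (((volume : Measure (Euc d)).restrict V).prod ((volume : Measure ℝ).restrict (Set.Ioi (0:ℝ)))))))
      ≤ ENNReal.ofReal C2 * ENNReal.ofReal T := by
    intro ε hε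
    have hMm : Measurable (fun z : ℝ × Euc d × Euc d × ℝ => M z.2.1 z.1) :=
      hMc.measurable.comp ((measurable_fst.comp measurable_snd).prodMk measurable_fst)
    have hfm : Measurable (fun z : ℝ × Euc d × Euc d × ℝ =>
        ENNReal.ofReal (((z.2.2.2 - M z.2.1 z.1) / ε) ^ 2
          * p ε z.2.1 z.2.2.1 z.2.2.2 z.1)) := by
      apply Measurable.ennreal_ofReal
      exact ((((measurable_snd.comp (measurable_snd.comp measurable_snd)).sub
        hMm).div_const ε).pow_const 2).mul (hpmz ε hε)
    rw [aux_lint_quad _ _ _ _ _ hfm]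
    refine le_trans (lintegral_mono_ae (g := fun _ => ENNReal.ofReal C2) ?_) ?_
    · filter_upwards [ae_restrict_mem measurableSet_Icc] with t ht
      exact hC2 ε hε t ht
    · rw [setLIntegral_const, Real.volume_Icc, sub_zero]
  -- integrability criterion
  have hIntB : ∀ ε ∈ Set.Ioc (0:ℝ) 1, ∀ (g : ℝ × Euc d × Euc d × ℝ → ℝ) (c : ℝ), 0 ≤ c →
      Measurable g →
      (∀ t x v m, |g (t, x, v, m)| ≤ B.indicator (fun _ => c) x * p ε x v m t) →
      Integrable g (((volume : Measure ℝ).restrict (Set.Icc (0:ℝ) T)).prod ((volume : Measure (Euc d)).prod (((volume : Measure (Euc d)).restrict V).prod ((volume : Measure ℝ).restrict (Set.Ioi (0:ℝ)))))) := by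
    intro ε hε g c hc hg hbd
    refine ⟨hg.aestronglyMeasurable, ?_⟩
    have hpoint : ∀ z : ℝ × Euc d × Euc d × ℝ, (‖g z‖₊ : ℝ≥0∞) ≤ ENNReal.ofReal c *
        (B.indicator (fun _ => (1:ℝ≥0∞)) z.2.1
          * ENNReal.ofReal (p ε z.2.1 z.2.2.1 z.2.2.2 z.1)) := by
      intro z
      have hb : |g z| ≤ B.indicator (fun _ => c) z.2.1 * p ε z.2.1 z.2.2.1 z.2.2.2 z.1 :=
        hbd z.1 z.2.1 z.2.2.1 z.2.2.2
      rw [← enorm_eq_nnnorm, Real.enorm_eq_ofReal_abs]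
      by_cases hx : z.2.1 ∈ B
      · rw [Set.indicator_of_mem hx] at hb
        rw [Set.indicator_of_mem hx, one_mul, ← ENNReal.ofReal_mul hc]
        exact ENNReal.ofReal_le_ofReal hb
      · rw [Set.indicator_of_notMem hx, zero_mul] at hb
        have h0 : g z = 0 := abs_nonpos_iff.1 hb
        simp [h0]
    show (∫⁻ z, (‖g z‖₊ : ℝ≥0∞) ∂(((volume : Measure ℝ).restrict (Set.Icc (0:ℝ) T)).prod ((volume : Measure (Euc d)).prod (((volume : Measure (Euc d)).restrict V).prod ((volume : Measure ℝ).restrict (Set.Ioi (0:ℝ))))))) < ⊤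
    calc (∫⁻ z, (‖g z‖₊ : ℝ≥0∞) ∂(((volume : Measure ℝ).restrict (Set.Icc (0:ℝ) T)).prod ((volume : Measure (Euc d)).prod (((volume : Measure (Euc d)).restrict V).prod ((volume : Measure ℝ).restrict (Set.Ioi (0:ℝ)))))))
        ≤ ∫⁻ z : ℝ × Euc d × Euc d × ℝ, ENNReal.ofReal c *
          (B.indicator (fun _ => (1:ℝ≥0∞)) z.2.1
            * ENNReal.ofReal (p ε z.2.1 z.2.2.1 z.2.2.2 z.1)) ∂(((volume : Measure ℝ).restrict (Set.Icc (0:ℝ) T)).prod ((volume : Measure (Euc d)).prod (((volume : Measure (Euc d)).restrict V).prod ((volume : Measure ℝ).restrict (Set.Ioi (0:ℝ)))))) := lintegral_mono hpoint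
      _ = ENNReal.ofReal c * ∫⁻ z : ℝ × Euc d × Euc d × ℝ,
          (B.indicator (fun _ => (1:ℝ≥0∞)) z.2.1
            * ENNReal.ofReal (p ε z.2.1 z.2.2.1 z.2.2.2 z.1)) ∂(((volume : Measure ℝ).restrict (Set.Icc (0:ℝ) T)).prod ((volume : Measure (Euc d)).prod (((volume : Measure (Euc d)).restrict V).prod ((volume : Measure ℝ).restrict (Set.Ioi (0:ℝ)))))) :=
          lintegral_const_mul' _ _ ENNReal.ofReal_ne_top
      _ ≤ ENNReal.ofReal c * (ENNReal.ofReal C1 * volume V * volume B * ENNReal.ofReal T) :=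
          mul_le_mul_right (hLP ε hε) _
      _ < ⊤ := ENNReal.mul_lt_top ENNReal.ofReal_lt_top
          (ENNReal.mul_lt_top (ENNReal.mul_lt_top
            (ENNReal.mul_lt_top ENNReal.ofReal_lt_top hVfin) hBfin) ENNReal.ofReal_lt_top)
  set C1' : ℝ := max C1 0 with hC1'def
  have hC1'nn : 0 ≤ C1' := le_max_right C1 0
  -- pointwise bound for the partial mass
  have hpbar_bd : ∀ ε ∈ Set.Ioc (0:ℝ) 1, ∀ x v : Euc d, ∀ t ∈ Set.Icc (0:ℝ) T,
      (0 ≤ ∫ m in Set.Ioi (0:ℝ), p ε x v m t) ∧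
      (∫ m in Set.Ioi (0:ℝ), p ε x v m t) ≤ C1' := by
    intro ε hε x v t ht
    have hsm : Measurable (fun m : ℝ => p ε x v m t) :=
      (hp_meas ε hε).comp (measurable_const.prodMk
        (measurable_const.prodMk (measurable_id.prodMk measurable_const)))
    constructor
    · exact integral_nonneg fun m => hp_nonneg ε hε x v m t
    · have heq : (∫ m in Set.Ioi (0:ℝ), p ε x v m t)
          = (∫⁻ m in Set.Ioi (0:ℝ), ENNReal.ofReal (p ε x v m t)).toReal :=
        integral_eq_lintegral_of_nonneg_ae
          (Filter.Eventually.of_forall fun m => hp_nonneg ε hε x v m t)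
          hsm.aestronglyMeasurable
      rw [heq]
      calc (∫⁻ m in Set.Ioi (0:ℝ), ENNReal.ofReal (p ε x v m t)).toReal
          ≤ (ENNReal.ofReal C1').toReal := by
            refine ENNReal.toReal_mono ENNReal.ofReal_ne_top ?_
            exact le_trans (hC1 ε hε t ht x v)
              (ENNReal.ofReal_le_ofReal (le_max_left C1 0))
        _ = C1' := ENNReal.toReal_ofReal hC1'nn
  -- measurability of the partial mass
  have hpbar_meas : ∀ ε ∈ Set.Ioc (0:ℝ) 1,
      Measurable (fun z : Euc d × Euc d × ℝ => ∫ m in Set.Ioi (0:ℝ), p ε z.1 z.2.1 m z.2.2) := by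
    intro ε hε
    have hq : StronglyMeasurable (fun q : (Euc d × Euc d × ℝ) × ℝ =>
        p ε q.1.1 q.1.2.1 q.2 q.1.2.2) :=
      ((hp_meas ε hε).comp ((measurable_fst.fst).prodMk
        (((measurable_fst.comp (measurable_snd.comp measurable_fst))).prodMk
          (measurable_snd.prodMk
            ((measurable_snd.comp (measurable_snd.comp measurable_fst))))))).stronglyMeasurable
    exact hq.integral_prod_right'.measurable
  -- the key decomposition
  have key : ∀ n, (∫ t in Set.Icc (0:ℝ) T, ∫ x : Euc d, ∫ v in V,
        ∫ m in Set.Ioi (0:ℝ), ψ x v m t * p (εn n) x v m t)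
      = (∫ z : ℝ × Euc d × Euc d × ℝ,
          (ψ z.2.1 z.2.2.1 z.2.2.2 z.1 - ψ z.2.1 z.2.2.1 (M z.2.1 z.1) z.1)
            * p (εn n) z.2.1 z.2.2.1 z.2.2.2 z.1 ∂(((volume : Measure ℝ).restrict (Set.Icc (0:ℝ) T)).prod ((volume : Measure (Euc d)).prod (((volume : Measure (Euc d)).restrict V).prod ((volume : Measure ℝ).restrict (Set.Ioi (0:ℝ)))))))
        + ∫ z, (∫ m in Set.Ioi (0:ℝ), p (εn n) z.1 z.2.1 m z.2.2)
            * (ψ z.1 z.2.1 (M z.1 z.2.2) z.2.2) ∂(xvtMeasure d V T) := by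
    intro n
    have hε := hεn_mem n
    have hp0 : ∀ x v m t, 0 ≤ p (εn n) x v m t := hp_nonneg (εn n) hε
    -- measurability
    have hψmz : Measurable (fun z : ℝ × Euc d × Euc d × ℝ => ψ z.2.1 z.2.2.1 z.2.2.2 z.1) :=
      hψcont.measurable.comp ((measurable_fst.comp measurable_snd).prodMk
        (((measurable_fst.comp (measurable_snd.comp measurable_snd))).prodMk
          (((measurable_snd.comp (measurable_snd.comp measurable_snd))).prodMk measurable_fst)))
    have hψMmz : Measurable (fun z : ℝ × Euc d × Euc d × ℝ => ψ z.2.1 z.2.2.1 (M z.2.1 z.1) z.1) := by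
      have hMm : Measurable (fun z : ℝ × Euc d × Euc d × ℝ => M z.2.1 z.1) :=
        hMc.measurable.comp ((measurable_fst.comp measurable_snd).prodMk measurable_fst)
      exact hψcont.measurable.comp ((measurable_fst.comp measurable_snd).prodMk
        (((measurable_fst.comp (measurable_snd.comp measurable_snd))).prodMk
          (hMm.prodMk measurable_fst)))
    -- integrabilities
    have hI1 : Integrable (fun z : ℝ × Euc d × Euc d × ℝ =>
        ψ z.2.1 z.2.2.1 z.2.2.2 z.1 * p (εn n) z.2.1 z.2.2.1 z.2.2.2 z.1) (((volume : Measure ℝ).restrict (Set.Icc (0:ℝ) T)).prod ((volume : Measure (Euc d)).prod (((volume : Measure (Euc d)).restrict V).prod ((volume : Measure ℝ).restrict (Set.Ioi (0:ℝ)))))) := by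
      refine hIntB (εn n) hε _ Cψ hCψpos.le (hψmz.mul (hpmz (εn n) hε)) ?_
      intro t x v m
      by_cases hx : x ∈ B
      · rw [Set.indicator_of_mem hx, abs_mul, abs_of_nonneg (hp0 x v m t)]
        exact mul_le_mul_of_nonneg_right (hCψ x v m t) (hp0 x v m t)
      · rw [Set.indicator_of_notMem hx, hψzero x v m t hx]
        simp
    have hI2 : Integrable (fun z : ℝ × Euc d × Euc d × ℝ =>
        ψ z.2.1 z.2.2.1 (M z.2.1 z.1) z.1 * p (εn n) z.2.1 z.2.2.1 z.2.2.2 z.1) (((volume : Measure ℝ).restrict (Set.Icc (0:ℝ) T)).prod ((volume : Measure (Euc d)).prod (((volume : Measure (Euc d)).restrict V).prod ((volume : Measure ℝ).restrict (Set.Ioi (0:ℝ)))))) := by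
      refine hIntB (εn n) hε _ Cψ hCψpos.le (hψMmz.mul (hpmz (εn n) hε)) ?_
      intro t x v m
      by_cases hx : x ∈ B
      · rw [Set.indicator_of_mem hx, abs_mul, abs_of_nonneg (hp0 x v m t)]
        exact mul_le_mul_of_nonneg_right (hCψ x v (M x t) t) (hp0 x v m t)
      · rw [Set.indicator_of_notMem hx, hψzero x v (M x t) t hx]
        simp
    have hI3 : Integrable (fun z : ℝ × Euc d × Euc d × ℝ =>
        (ψ z.2.1 z.2.2.1 z.2.2.2 z.1 - ψ z.2.1 z.2.2.1 (M z.2.1 z.1) z.1)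
          * p (εn n) z.2.1 z.2.2.1 z.2.2.2 z.1) (((volume : Measure ℝ).restrict (Set.Icc (0:ℝ) T)).prod ((volume : Measure (Euc d)).prod (((volume : Measure (Euc d)).restrict V).prod ((volume : Measure ℝ).restrict (Set.Ioi (0:ℝ)))))) := by
      refine hIntB (εn n) hε _ (2 * Cψ) (by positivity)
        ((hψmz.sub hψMmz).mul (hpmz (εn n) hε)) ?_
      intro t x v m
      by_cases hx : x ∈ B
      · rw [Set.indicator_of_mem hx, abs_mul, abs_of_nonneg (hp0 x v m t)]
        refine mul_le_mul_of_nonneg_right ?_ (hp0 x v m t)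
        calc |ψ x v m t - ψ x v (M x t) t| ≤ |ψ x v m t| + |ψ x v (M x t) t| := abs_sub _ _
          _ ≤ Cψ + Cψ := add_le_add (hCψ x v m t) (hCψ x v (M x t) t)
          _ = 2 * Cψ := by ring
      · rw [Set.indicator_of_notMem hx, hψzero x v m t hx, hψzero x v (M x t) t hx]
        simp
    -- Fubini for the second piece, with the m-integral evaluated
    have hc2 : ∀ (t : ℝ) (x v : Euc d), (∫ m in Set.Ioi (0:ℝ),
        ψ x v (M x t) t * p (εn n) x v m t)
        = (∫ m in Set.Ioi (0:ℝ), p (εn n) x v m t) * ψ x v (M x t) t := by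
      intro t x v
      rw [integral_const_mul, mul_comm]
    have hmeas4 : Measurable (fun z : Euc d × Euc d × ℝ =>
        (∫ m in Set.Ioi (0:ℝ), p (εn n) z.1 z.2.1 m z.2.2)
          * ψ z.1 z.2.1 (M z.1 z.2.2) z.2.2) :=
      (hpbar_meas (εn n) hε).mul hΨcont.measurable
    have hbd4 : ∀ x v : Euc d, ∀ t : ℝ, t ∈ Set.Icc (0:ℝ) T →
        |(∫ m in Set.Ioi (0:ℝ), p (εn n) x v m t) * ψ x v (M x t) t|
          ≤ B.indicator (fun _ => C1' * Cψ) x := by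
      intro x v t ht
      by_cases hx : x ∈ B
      · rw [Set.indicator_of_mem hx, abs_mul]
        obtain ⟨hnn, hle⟩ := hpbar_bd (εn n) hε x v t ht
        rw [abs_of_nonneg hnn]
        exact mul_le_mul hle (hCψ x v (M x t) t) (abs_nonneg _) hC1'nn
      · rw [Set.indicator_of_notMem hx, hψzero x v (M x t) t hx, mul_zero, abs_zero]
    have hc4 := aux_xvt d V T hVmeas hVfin R (C1' * Cψ)
      (fun x v t => (∫ m in Set.Ioi (0:ℝ), p (εn n) x v m t) * ψ x v (M x t) t)
      hmeas4 hbd4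
    calc (∫ t in Set.Icc (0:ℝ) T, ∫ x : Euc d, ∫ v in V,
          ∫ m in Set.Ioi (0:ℝ), ψ x v m t * p (εn n) x v m t)
        = ∫ z : ℝ × Euc d × Euc d × ℝ,
            ψ z.2.1 z.2.2.1 z.2.2.2 z.1 * p (εn n) z.2.1 z.2.2.1 z.2.2.2 z.1 ∂(((volume : Measure ℝ).restrict (Set.Icc (0:ℝ) T)).prod ((volume : Measure (Euc d)).prod (((volume : Measure (Euc d)).restrict V).prod ((volume : Measure ℝ).restrict (Set.Ioi (0:ℝ)))))) :=
          (aux_quad _ hI1).symm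
      _ = (∫ z : ℝ × Euc d × Euc d × ℝ,
            (ψ z.2.1 z.2.2.1 z.2.2.2 z.1 - ψ z.2.1 z.2.2.1 (M z.2.1 z.1) z.1)
              * p (εn n) z.2.1 z.2.2.1 z.2.2.2 z.1 ∂(((volume : Measure ℝ).restrict (Set.Icc (0:ℝ) T)).prod ((volume : Measure (Euc d)).prod (((volume : Measure (Euc d)).restrict V).prod ((volume : Measure ℝ).restrict (Set.Ioi (0:ℝ)))))))
          + ∫ z : ℝ × Euc d × Euc d × ℝ,
            ψ z.2.1 z.2.2.1 (M z.2.1 z.1) z.1 * p (εn n) z.2.1 z.2.2.1 z.2.2.2 z.1 ∂(((volume : Measure ℝ).restrict (Set.Icc (0:ℝ) T)).prod ((volume : Measure (Euc d)).prod (((volume : Measure (Euc d)).restrict V).prod ((volume : Measure ℝ).restrict (Set.Ioi (0:ℝ)))))) := by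
          rw [← integral_add hI3 hI2]
          congr 1
          funext z
          ring
      _ = (∫ z : ℝ × Euc d × Euc d × ℝ,
            (ψ z.2.1 z.2.2.1 z.2.2.2 z.1 - ψ z.2.1 z.2.2.1 (M z.2.1 z.1) z.1)
              * p (εn n) z.2.1 z.2.2.1 z.2.2.2 z.1 ∂(((volume : Measure ℝ).restrict (Set.Icc (0:ℝ) T)).prod ((volume : Measure (Euc d)).prod (((volume : Measure (Euc d)).restrict V).prod ((volume : Measure ℝ).restrict (Set.Ioi (0:ℝ)))))))
          + ∫ t in Set.Icc (0:ℝ) T, ∫ x : Euc d, ∫ v in V,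
            ∫ m in Set.Ioi (0:ℝ), ψ x v (M x t) t * p (εn n) x v m t := by
          rw [aux_quad _ hI2]
      _ = (∫ z : ℝ × Euc d × Euc d × ℝ,
            (ψ z.2.1 z.2.2.1 z.2.2.2 z.1 - ψ z.2.1 z.2.2.1 (M z.2.1 z.1) z.1)
              * p (εn n) z.2.1 z.2.2.1 z.2.2.2 z.1 ∂(((volume : Measure ℝ).restrict (Set.Icc (0:ℝ) T)).prod ((volume : Measure (Euc d)).prod (((volume : Measure (Euc d)).restrict V).prod ((volume : Measure ℝ).restrict (Set.Ioi (0:ℝ)))))))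
          + ∫ t in Set.Icc (0:ℝ) T, ∫ x : Euc d, ∫ v in V,
            (∫ m in Set.Ioi (0:ℝ), p (εn n) x v m t) * ψ x v (M x t) t := by
          simp only [hc2]
      _ = (∫ z : ℝ × Euc d × Euc d × ℝ,
            (ψ z.2.1 z.2.2.1 z.2.2.2 z.1 - ψ z.2.1 z.2.2.1 (M z.2.1 z.1) z.1)
              * p (εn n) z.2.1 z.2.2.1 z.2.2.2 z.1 ∂(((volume : Measure ℝ).restrict (Set.Icc (0:ℝ) T)).prod ((volume : Measure (Euc d)).prod (((volume : Measure (Euc d)).restrict V).prod ((volume : Measure ℝ).restrict (Set.Ioi (0:ℝ)))))))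
          + ∫ z, (∫ m in Set.Ioi (0:ℝ), p (εn n) z.1 z.2.1 m z.2.2)
              * (ψ z.1 z.2.1 (M z.1 z.2.2) z.2.2) ∂(xvtMeasure d V T) := by
          congr 1
          exact hc4.symm
  -- finiteness of the limiting constants
  have hE1top : (ENNReal.ofReal C1 * volume V * volume B * ENNReal.ofReal T) ≠ ⊤ :=
    ENNReal.mul_ne_top (ENNReal.mul_ne_top (ENNReal.mul_ne_top
      ENNReal.ofReal_ne_top hVfin.ne) hBfin.ne) ENNReal.ofReal_ne_top
  have hE2top : (ENNReal.ofReal C2 * ENNReal.ofReal T) ≠ ⊤ :=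
    ENNReal.mul_ne_top ENNReal.ofReal_ne_top ENNReal.ofReal_ne_top
  -- the fluctuation part tends to zero
  have hA0 : Tendsto (fun n => ∫ z : ℝ × Euc d × Euc d × ℝ,
      (ψ z.2.1 z.2.2.1 z.2.2.2 z.1 - ψ z.2.1 z.2.2.1 (M z.2.1 z.1) z.1)
        * p (εn n) z.2.1 z.2.2.1 z.2.2.2 z.1 ∂(((volume : Measure ℝ).restrict (Set.Icc (0:ℝ) T)).prod ((volume : Measure (Euc d)).prod (((volume : Measure (Euc d)).restrict V).prod ((volume : Measure ℝ).restrict (Set.Ioi (0:ℝ))))))) atTop (nhds 0) := by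
    rw [Metric.tendsto_atTop]
    intro η0 hη0
    set E1r : ℝ := (ENNReal.ofReal C1 * volume V * volume B * ENNReal.ofReal T).toReal with hE1r
    set E2r : ℝ := (ENNReal.ofReal C2 * ENNReal.ofReal T).toReal with hE2r
    have hE1rnn : (0:ℝ) ≤ E1r := ENNReal.toReal_nonneg
    have hE2rnn : (0:ℝ) ≤ E2r := ENNReal.toReal_nonneg
    set η : ℝ := η0 / (2 * (E1r + 1)) with hηdef
    have hηpos : 0 < η := by positivity
    obtain ⟨δ, hδpos, hδ⟩ := Metric.uniformContinuous_iff.1 hψu η hηpos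
    have hbound : ∀ n, |∫ z : ℝ × Euc d × Euc d × ℝ,
        (ψ z.2.1 z.2.2.1 z.2.2.2 z.1 - ψ z.2.1 z.2.2.1 (M z.2.1 z.1) z.1)
          * p (εn n) z.2.1 z.2.2.1 z.2.2.2 z.1 ∂(((volume : Measure ℝ).restrict (Set.Icc (0:ℝ) T)).prod ((volume : Measure (Euc d)).prod (((volume : Measure (Euc d)).restrict V).prod ((volume : Measure ℝ).restrict (Set.Ioi (0:ℝ))))))|
        ≤ η * E1r + (2 * Cψ / δ ^ 2 * (εn n) ^ 2) * E2r := by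
      intro n
      have hε := hεn_mem n
      have hεpos : (0:ℝ) < εn n := hε.1
      have hp0 := hp_nonneg (εn n) hε
      have hcnn : (0:ℝ) ≤ 2 * Cψ / δ ^ 2 * (εn n) ^ 2 := by positivity
      have hpoint : ∀ z : ℝ × Euc d × Euc d × ℝ,
          ENNReal.ofReal ‖(ψ z.2.1 z.2.2.1 z.2.2.2 z.1 - ψ z.2.1 z.2.2.1 (M z.2.1 z.1) z.1)
              * p (εn n) z.2.1 z.2.2.1 z.2.2.2 z.1‖
          ≤ ENNReal.ofReal η * (B.indicator (fun _ => (1:ℝ≥0∞)) z.2.1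
              * ENNReal.ofReal (p (εn n) z.2.1 z.2.2.1 z.2.2.2 z.1))
            + ENNReal.ofReal (2 * Cψ / δ ^ 2 * (εn n) ^ 2)
              * ENNReal.ofReal (((z.2.2.2 - M z.2.1 z.1) / εn n) ^ 2
                * p (εn n) z.2.1 z.2.2.1 z.2.2.2 z.1) := by
        rintro ⟨t, x, v, m⟩
        by_cases hx : x ∈ B
        · have hχ : B.indicator (fun _ => (1:ℝ≥0∞)) x = 1 := Set.indicator_of_mem hx _
          simp only [hχ, one_mul]
          rw [Real.norm_eq_abs, abs_mul, abs_of_nonneg (hp0 x v m t)]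
          by_cases hlt : |m - M x t| < δ
          · have hdlt : dist ((x, v, m, t) : Euc d × Euc d × ℝ × ℝ)
                ((x, v, M x t, t) : Euc d × Euc d × ℝ × ℝ) < δ := by
              rw [hdist x v m t]; exact hlt
            have hψd : |ψ x v m t - ψ x v (M x t) t| ≤ η := by
              have h := hδ hdlt
              rw [Real.dist_eq] at h
              exact h.le
            calc ENNReal.ofReal (|ψ x v m t - ψ x v (M x t) t| * p (εn n) x v m t)
                ≤ ENNReal.ofReal (η * p (εn n) x v m t) := ENNReal.ofReal_le_ofReal
                  (mul_le_mul_of_nonneg_right hψd (hp0 x v m t))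
              _ = ENNReal.ofReal η * ENNReal.ofReal (p (εn n) x v m t) :=
                  ENNReal.ofReal_mul hηpos.le
              _ ≤ _ := self_le_add_right _ _
          · push_neg at hlt
            have h2C : |ψ x v m t - ψ x v (M x t) t| ≤ 2 * Cψ := by
              calc |ψ x v m t - ψ x v (M x t) t|
                  ≤ |ψ x v m t| + |ψ x v (M x t) t| := abs_sub _ _
                _ ≤ Cψ + Cψ := add_le_add (hCψ x v m t) (hCψ x v (M x t) t)
                _ = 2 * Cψ := by ring
            have hsq : δ ^ 2 ≤ (m - M x t) ^ 2 := by
              have h := pow_le_pow_left₀ hδpos.le hlt 2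
              rwa [sq_abs] at h
            have hkey : |ψ x v m t - ψ x v (M x t) t| * p (εn n) x v m t
                ≤ (2 * Cψ / δ ^ 2 * (εn n) ^ 2)
                  * (((m - M x t) / εn n) ^ 2 * p (εn n) x v m t) := by
              have hrw : (2 * Cψ / δ ^ 2 * (εn n) ^ 2)
                  * (((m - M x t) / εn n) ^ 2 * p (εn n) x v m t)
                  = (2 * Cψ * ((m - M x t) ^ 2 / δ ^ 2)) * p (εn n) x v m t := by
                field_simp
              rw [hrw]
              refine mul_le_mul_of_nonneg_right ?_ (hp0 x v m t)
              have h1le : (1:ℝ) ≤ (m - M x t) ^ 2 / δ ^ 2 :=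
                (one_le_div (by positivity)).2 hsq
              nlinarith [h2C, hCψpos.le]
            calc ENNReal.ofReal (|ψ x v m t - ψ x v (M x t) t| * p (εn n) x v m t)
                ≤ ENNReal.ofReal ((2 * Cψ / δ ^ 2 * (εn n) ^ 2)
                  * (((m - M x t) / εn n) ^ 2 * p (εn n) x v m t)) :=
                  ENNReal.ofReal_le_ofReal hkey
              _ = ENNReal.ofReal (2 * Cψ / δ ^ 2 * (εn n) ^ 2)
                  * ENNReal.ofReal (((m - M x t) / εn n) ^ 2 * p (εn n) x v m t) :=
                  ENNReal.ofReal_mul hcnn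
              _ ≤ _ := le_add_self
        · rw [hψzero x v m t hx, hψzero x v (M x t) t hx]
          simp
      have hg1m : Measurable (fun z : ℝ × Euc d × Euc d × ℝ =>
          ENNReal.ofReal η * (B.indicator (fun _ => (1:ℝ≥0∞)) z.2.1
            * ENNReal.ofReal (p (εn n) z.2.1 z.2.2.1 z.2.2.2 z.1))) :=
        measurable_const.mul (((measurable_const.indicator hBm).comp
          (measurable_fst.comp measurable_snd)).mul (hpmz (εn n) hε).ennreal_ofReal)
      have hlin : (∫⁻ z : ℝ × Euc d × Euc d × ℝ,
          ENNReal.ofReal ‖(ψ z.2.1 z.2.2.1 z.2.2.2 z.1 - ψ z.2.1 z.2.2.1 (M z.2.1 z.1) z.1)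
            * p (εn n) z.2.1 z.2.2.1 z.2.2.2 z.1‖ ∂(((volume : Measure ℝ).restrict (Set.Icc (0:ℝ) T)).prod ((volume : Measure (Euc d)).prod (((volume : Measure (Euc d)).restrict V).prod ((volume : Measure ℝ).restrict (Set.Ioi (0:ℝ)))))))
          ≤ ENNReal.ofReal η * (ENNReal.ofReal C1 * volume V * volume B * ENNReal.ofReal T)
            + ENNReal.ofReal (2 * Cψ / δ ^ 2 * (εn n) ^ 2)
              * (ENNReal.ofReal C2 * ENNReal.ofReal T) := by
        refine le_trans (lintegral_mono hpoint) ?_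
        rw [lintegral_add_left hg1m,
          lintegral_const_mul' _ _ ENNReal.ofReal_ne_top,
          lintegral_const_mul' _ _ ENNReal.ofReal_ne_top]
        exact add_le_add (mul_le_mul_right (hLP (εn n) hε) _)
          (mul_le_mul_right (hLM (εn n) hε) _)
      have hfin : (ENNReal.ofReal η * (ENNReal.ofReal C1 * volume V * volume B
            * ENNReal.ofReal T)
          + ENNReal.ofReal (2 * Cψ / δ ^ 2 * (εn n) ^ 2)
            * (ENNReal.ofReal C2 * ENNReal.ofReal T)) ≠ ⊤ :=
        ENNReal.add_ne_top.2 ⟨ENNReal.mul_ne_top ENNReal.ofReal_ne_top hE1top,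
          ENNReal.mul_ne_top ENNReal.ofReal_ne_top hE2top⟩
      calc |∫ z : ℝ × Euc d × Euc d × ℝ,
          (ψ z.2.1 z.2.2.1 z.2.2.2 z.1 - ψ z.2.1 z.2.2.1 (M z.2.1 z.1) z.1)
            * p (εn n) z.2.1 z.2.2.1 z.2.2.2 z.1 ∂(((volume : Measure ℝ).restrict (Set.Icc (0:ℝ) T)).prod ((volume : Measure (Euc d)).prod (((volume : Measure (Euc d)).restrict V).prod ((volume : Measure ℝ).restrict (Set.Ioi (0:ℝ))))))|
          ≤ (∫⁻ z : ℝ × Euc d × Euc d × ℝ,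
            ENNReal.ofReal ‖(ψ z.2.1 z.2.2.1 z.2.2.2 z.1
              - ψ z.2.1 z.2.2.1 (M z.2.1 z.1) z.1)
              * p (εn n) z.2.1 z.2.2.1 z.2.2.2 z.1‖ ∂(((volume : Measure ℝ).restrict (Set.Icc (0:ℝ) T)).prod ((volume : Measure (Euc d)).prod (((volume : Measure (Euc d)).restrict V).prod ((volume : Measure ℝ).restrict (Set.Ioi (0:ℝ))))))).toReal := by
            rw [← Real.norm_eq_abs]
            exact norm_integral_le_lintegral_norm _
        _ ≤ (ENNReal.ofReal η * (ENNReal.ofReal C1 * volume V * volume B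
              * ENNReal.ofReal T)
            + ENNReal.ofReal (2 * Cψ / δ ^ 2 * (εn n) ^ 2)
              * (ENNReal.ofReal C2 * ENNReal.ofReal T)).toReal :=
            ENNReal.toReal_mono hfin hlin
        _ = η * E1r + (2 * Cψ / δ ^ 2 * (εn n) ^ 2) * E2r := by
            have e1 : (ENNReal.ofReal η * (ENNReal.ofReal C1 * volume V * volume B
                * ENNReal.ofReal T)).toReal = η * E1r := by
              rw [ENNReal.toReal_mul, ENNReal.toReal_ofReal hηpos.le, ← hE1r]
            have e2 : (ENNReal.ofReal (2 * Cψ / δ ^ 2 * (εn n) ^ 2)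
                * (ENNReal.ofReal C2 * ENNReal.ofReal T)).toReal
                = (2 * Cψ / δ ^ 2 * (εn n) ^ 2) * E2r := by
              rw [ENNReal.toReal_mul, ENNReal.toReal_ofReal hcnn, ← hE2r]
            rw [ENNReal.toReal_add (ENNReal.mul_ne_top ENNReal.ofReal_ne_top hE1top)
              (ENNReal.mul_ne_top ENNReal.ofReal_ne_top hE2top), e1, e2]
    have htail : Tendsto (fun n => (2 * Cψ / δ ^ 2 * (εn n) ^ 2) * E2r) atTop (nhds 0) := by
      have h1 : Tendsto (fun n => εn n * εn n) atTop (nhds 0) := by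
        have h := hεn_lim.mul hεn_lim
        simpa using h
      have h2 := (h1.const_mul (2 * Cψ / δ ^ 2)).mul_const E2r
      simp only [mul_zero, zero_mul] at h2
      exact h2.congr fun n => by ring
    have hsmall : ∀ᶠ n in atTop, (2 * Cψ / δ ^ 2 * (εn n) ^ 2) * E2r < η0 / 2 :=
      htail.eventually_lt_const (by positivity)
    obtain ⟨N, hN⟩ := Filter.eventually_atTop.1 hsmall
    refine ⟨N, fun n hn => ?_⟩
    rw [Real.dist_eq, sub_zero]
    have h1 := hbound n
    have h2 := hN n hn
    have hkey2 : η * (E1r + 1) = η0 / 2 := by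
      rw [hηdef]; field_simp
    calc |∫ z : ℝ × Euc d × Euc d × ℝ,
        (ψ z.2.1 z.2.2.1 z.2.2.2 z.1 - ψ z.2.1 z.2.2.1 (M z.2.1 z.1) z.1)
          * p (εn n) z.2.1 z.2.2.1 z.2.2.2 z.1 ∂(((volume : Measure ℝ).restrict (Set.Icc (0:ℝ) T)).prod ((volume : Measure (Euc d)).prod (((volume : Measure (Euc d)).restrict V).prod ((volume : Measure ℝ).restrict (Set.Ioi (0:ℝ))))))|
        ≤ η * E1r + (2 * Cψ / δ ^ 2 * (εn n) ^ 2) * E2r := h1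
      _ < η0 := by nlinarith [hηpos]
  -- final assembly
  have hfun : (fun n => ∫ t in Set.Icc (0:ℝ) T, ∫ x : Euc d, ∫ v in V,
        ∫ m in Set.Ioi (0:ℝ), ψ x v m t * p (εn n) x v m t)
      = fun n => (∫ z : ℝ × Euc d × Euc d × ℝ,
          (ψ z.2.1 z.2.2.1 z.2.2.2 z.1 - ψ z.2.1 z.2.2.1 (M z.2.1 z.1) z.1)
            * p (εn n) z.2.1 z.2.2.1 z.2.2.2 z.1 ∂(((volume : Measure ℝ).restrict (Set.Icc (0:ℝ) T)).prod ((volume : Measure (Euc d)).prod (((volume : Measure (Euc d)).restrict V).prod ((volume : Measure ℝ).restrict (Set.Ioi (0:ℝ)))))))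
        + ∫ z, (∫ m in Set.Ioi (0:ℝ), p (εn n) z.1 z.2.1 m z.2.2)
            * (ψ z.1 z.2.1 (M z.1 z.2.2) z.2.2) ∂(xvtMeasure d V T) := funext key
  rw [hfun]
  have hsum := hA0.add hWlim'
  rw [zero_add, hRHS] at hsum
  exact hsum
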